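/- arXiv:0802.1696 — 5 statements merged into one kernel-verified Lean document; each statement's English description precedes it below -/
import Mathlib

section
/- Let F : ℕ → ℕ be a sequence of positive integers that is GCD-morphic, i.e. gcd(F m, F n) = F (gcd m n) for all m, n ≥ 1. Then F is cobweb-admissible: for all k ≤ n, the product (∏_{i=1}^{k} F i) · (∏_{i=1}^{n−k} F i) divides ∏_{i=1}^{n} F i; equivalently, every F-nomial coefficient \binom{n}{k}_F = n_F!/(k_F!(n−k)_F!) is a nonnegative integer. -/
/-!
For every `d`, the indices `i ≥ 1` with `d ∣ F i` are exactly the multiples of the least such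
index `r`: this set is closed under `gcd` because `F` is GCD-morphic, and `F r ∣ F i` whenever
`r ∣ i`. So `d` divides exactly `⌊m / r⌋` of `F 1, …, F m`, and
`⌊k / r⌋ + ⌊l / r⌋ ≤ ⌊(k + l) / r⌋`. Taking `d = p ^ e` and summing over `e` counts `p`-adic
valuations, as in Legendre's formula for ordinary factorials.
-/

open Finset

namespace Nat

theorem factorization_eq_card_pow_dvd_of_le {p x b : ℕ} (hp : p.Prime) (hx : x ≠ 0)
    (hxb : x ≤ b) : x.factorization p = #{e ∈ Icc 1 b | p ^ e ∣ x} := by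
  rw [factorization_eq_card_pow_dvd x hp,
    Ico_filter_pow_dvd_eq hp hx (hxb.trans (b.lt_pow_self hp.one_lt).le)]

theorem factorization_prod_apply_eq_sum_card {ι : Type*} {s : Finset ι} {f : ι → ℕ}
    {p b : ℕ} (hp : p.Prime) (hf : ∀ i ∈ s, f i ≠ 0) (hfb : ∀ i ∈ s, f i ≤ b) :
    (∏ i ∈ s, f i).factorization p = ∑ e ∈ Icc 1 b, #{i ∈ s | p ^ e ∣ f i} := by
  rw [factorization_prod_apply hf]
  simp only [card_filter]
  rw [sum_comm]
  exact sum_congr rfl fun i hi => by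
    rw [factorization_eq_card_pow_dvd_of_le hp (hf i hi) (hfb i hi), card_filter]

theorem prod_dvd_prod_of_card_filter_dvd_le {ι κ : Type*} {s : Finset ι} {t : Finset κ}
    {f : ι → ℕ} {g : κ → ℕ}
    (h : ∀ q, #{i ∈ s | q ∣ f i} ≤ #{j ∈ t | q ∣ g j}) :
    ∏ i ∈ s, f i ∣ ∏ j ∈ t, g j := by
  by_cases hg : ∃ j ∈ t, g j = 0
  · obtain ⟨j, hj, hgj⟩ := hg
    rw [prod_eq_zero hj hgj]
    exact dvd_zero _
  push Not at hg
  -- `h 0` compares the numbers of zero factors.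
  have hf : ∀ i ∈ s, f i ≠ 0 := by
    simpa [filter_false_of_mem hg] using h 0
  set b := ∑ i ∈ s, f i + ∑ j ∈ t, g j
  have hfb : ∀ i ∈ s, f i ≤ b := fun i hi =>
    le_add_right_of_le (single_le_sum (fun _ _ => zero_le _) hi)
  have hgb : ∀ j ∈ t, g j ≤ b := fun j hj =>
    le_add_left_of_le (single_le_sum (fun _ _ => zero_le _) hj)
  rw [← factorization_le_iff_dvd (prod_ne_zero_iff.mpr hf) (prod_ne_zero_iff.mpr hg)]
  intro p
  by_cases hp : p.Prime
  · rw [factorization_prod_apply_eq_sum_card hp hf hfb,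
      factorization_prod_apply_eq_sum_card hp hg hgb]
    exact sum_le_sum fun e _ => h (p ^ e)
  · simp [factorization_eq_zero_of_not_prime _ hp]

end Nat

theorem Finset.card_filter_disjSum {ι κ : Type*} (s : Finset ι) (t : Finset κ)
    (P : ι ⊕ κ → Prop) [DecidablePred P] :
    #{x ∈ s.disjSum t | P x} = #{i ∈ s | P (.inl i)} + #{j ∈ t | P (.inr j)} := by
  simp only [card_filter, sum_disjSum]

def IsGCDMorphic (F : ℕ → ℕ) : Prop :=
  ∀ m n : ℕ, 1 ≤ m → 1 ≤ n → Nat.gcd (F m) (F n) = F (Nat.gcd m n)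

namespace IsGCDMorphic

variable {F : ℕ → ℕ} (hF : IsGCDMorphic F)
include hF

theorem dvd_of_dvd {r i : ℕ} (hr : 1 ≤ r) (hi : 1 ≤ i) (hri : r ∣ i) : F r ∣ F i := by
  rw [← Nat.gcd_eq_left hri, ← hF r i hr hi]
  exact Nat.gcd_dvd_right _ _

/-- `r` is the rank of apparition of `d`, with `r = 0` when `d` divides no `F i`. -/
theorem exists_dvd_iff_dvd (d : ℕ) : ∃ r, ∀ i, 1 ≤ i → (d ∣ F i ↔ r ∣ i) := by
  classical
  by_cases hex : ∃ i, 1 ≤ i ∧ d ∣ F i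
  · obtain ⟨hr, hdr⟩ := Nat.find_spec hex
    set r := Nat.find hex
    refine ⟨r, fun i hi => ⟨fun hdi => ?_, fun hri => hdr.trans (hF.dvd_of_dvd hr hi hri)⟩⟩
    have hgcd_pos : 1 ≤ Nat.gcd i r := Nat.gcd_pos_of_pos_left r hi
    have hd_gcd : d ∣ F (Nat.gcd i r) := hF i r hi hr ▸ Nat.dvd_gcd hdi hdr
    have hgcd_eq : Nat.gcd i r = r :=
      le_antisymm (Nat.le_of_dvd hr (Nat.gcd_dvd_right i r))
        (Nat.find_min' hex ⟨hgcd_pos, hd_gcd⟩)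
    exact hgcd_eq ▸ Nat.gcd_dvd_left i r
  · push Not at hex
    exact ⟨0, fun i hi => iff_of_false (hex i hi) (by rw [zero_dvd_iff]; omega)⟩

theorem exists_card_filter_dvd_eq_div (d : ℕ) :
    ∃ r, ∀ m, #{i ∈ Icc 1 m | d ∣ F i} = m / r := by
  obtain ⟨r, hr⟩ := hF.exists_dvd_iff_dvd d
  refine ⟨r, fun m => ?_⟩
  rw [← Nat.Ioc_filter_dvd_card_eq_div m r, ← Icc_add_one_left_eq_Ioc, zero_add]
  exact congrArg card (filter_congr fun i hi => hr i (mem_Icc.mp hi).1)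

theorem card_filter_dvd_add_le (d k l : ℕ) :
    #{i ∈ Icc 1 k | d ∣ F i} + #{i ∈ Icc 1 l | d ∣ F i} ≤
      #{i ∈ Icc 1 (k + l) | d ∣ F i} := by
  obtain ⟨r, hr⟩ := hF.exists_card_filter_dvd_eq_div d
  rw [hr, hr, hr]
  exact Nat.div_add_div_le_add_div

end IsGCDMorphic

theorem gcd_morphic_cobweb_admissible_general (F : ℕ → ℕ)
    (hgcd : ∀ m n : ℕ, 1 ≤ m → 1 ≤ n → Nat.gcd (F m) (F n) = F (Nat.gcd m n))
    (k n : ℕ) (hkn : k ≤ n) :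
    (∏ i ∈ Finset.Icc 1 k, F i) * (∏ i ∈ Finset.Icc 1 (n - k), F i) ∣
      ∏ i ∈ Finset.Icc 1 n, F i := by
  classical
  obtain ⟨l, rfl⟩ := Nat.exists_eq_add_of_le hkn
  rw [Nat.add_sub_cancel_left]
  convert Nat.prod_dvd_prod_of_card_filter_dvd_le
    (s := (Icc 1 k).disjSum (Icc 1 l)) (f := Sum.elim F F) fun q => ?_ using 1
  · rw [prod_disjSum]
    rfl
  · rw [card_filter_disjSum]
    exact IsGCDMorphic.card_filter_dvd_add_le hgcd q k l

/-- A GCD-morphic sequence of positive integers is cobweb-admissible: every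
`F`-nomial coefficient `n_F! / (k_F! (n-k)_F!)` is a (nonnegative) integer,
i.e. `k_F! ⬝ (n-k)_F!` divides `n_F!`, where `m_F! = ∏_{i=1}^{m} F i`. -/
theorem gcd_morphic_cobweb_admissible (F : ℕ → ℕ) (hpos : ∀ i, 0 < F i)
    (hgcd : ∀ m n : ℕ, 1 ≤ m → 1 ≤ n → Nat.gcd (F m) (F n) = F (Nat.gcd m n))
    (k n : ℕ) (hkn : k ≤ n) :
    (∏ i ∈ Finset.Icc 1 k, F i) * (∏ i ∈ Finset.Icc 1 (n - k), F i) ∣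
      ∏ i ∈ Finset.Icc 1 n, F i :=
  gcd_morphic_cobweb_admissible_general F hgcd k n hkn
end

section
/- The Fibonacci sequence is cobweb-admissible: for all k ≤ n, the product (∏_{i=1}^{k} fib i) · (∏_{i=1}^{n−k} fib i) divides ∏_{i=1}^{n} fib i; equivalently, every fibonomial coefficient \binom{n}{k}_{fib} = n_{fib}!/(k_{fib}!(n−k)_{fib}!) is a nonnegative integer. -/
private def Ff (m : ℕ) : ℕ := ∏ i ∈ Finset.Icc 1 m, Nat.fib i

private lemma Ff_succ (m : ℕ) : Ff (m+1) = Ff m * Nat.fib (m+1) := by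
  unfold Ff
  rw [Finset.prod_Icc_succ_top (by omega)]

private lemma Ff_dvd (k n : ℕ) (hkn : k ≤ n) : Ff k * Ff (n - k) ∣ Ff n := by
  induction n generalizing k with
  | zero =>
    interval_cases k
    simp [Ff]
  | succ n ih =>
    rcases Nat.lt_or_ge k (n+1) with hk | hk
    · have hk' : k ≤ n := by omega
      rcases Nat.eq_zero_or_pos k with rfl | hkpos
      · simp [Ff]
      · have hsub : n + 1 - k = (n - k) + 1 := by omega
        have hfib : Nat.fib (n+1)
            = Nat.fib k * Nat.fib (n-k) + Nat.fib (k+1) * Nat.fib (n-k+1) := by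
          have h := Nat.fib_add k (n - k)
          rw [show k + (n - k) + 1 = n + 1 by omega] at h
          exact h
        rw [hsub, Ff_succ, Ff_succ, hfib, Nat.mul_add]
        apply dvd_add
        · have hk1 : k - 1 ≤ n := by omega
          have h1 := ih (k-1) hk1
          have hkk : Ff k = Ff (k-1) * Nat.fib k := by
            have := Ff_succ (k-1)
            rwa [show k - 1 + 1 = k by omega] at this
          have hn1 : n - (k-1) = (n - k) + 1 := by omega
          rw [hn1, Ff_succ] at h1
          calc Ff k * (Ff (n-k) * Nat.fib (n-k+1))
              = (Ff (k-1) * (Ff (n-k) * Nat.fib (n-k+1))) * Nat.fib k := by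
                rw [hkk]; ring
            _ ∣ Ff n * Nat.fib k := mul_dvd_mul h1 dvd_rfl
            _ ∣ Ff n * (Nat.fib k * Nat.fib (n-k)) := ⟨Nat.fib (n-k), by ring⟩
        · have h1 := ih k hk'
          calc Ff k * (Ff (n-k) * Nat.fib (n-k+1))
              = (Ff k * Ff (n-k)) * Nat.fib (n-k+1) := by ring
            _ ∣ Ff n * Nat.fib (n-k+1) := mul_dvd_mul h1 dvd_rfl
            _ ∣ Ff n * (Nat.fib (k+1) * Nat.fib (n-k+1)) := ⟨Nat.fib (k+1), by ring⟩
    · have hkeq : k = n + 1 := by omega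
      subst hkeq
      simp [Ff]

/-- The Fibonacci sequence is cobweb-admissible: every fibonomial coefficient
`n_fib! / (k_fib! (n-k)_fib!)` is a (nonnegative) integer, i.e.
`k_fib! ⬝ (n-k)_fib!` divides `n_fib!`, where `m_fib! = ∏_{i=1}^{m} fib i`. -/
theorem fib_cobweb_admissible (k n : ℕ) (hkn : k ≤ n) :
    (∏ i ∈ Finset.Icc 1 k, Nat.fib i) * (∏ i ∈ Finset.Icc 1 (n - k), Nat.fib i) ∣
      ∏ i ∈ Finset.Icc 1 n, Nat.fib i := by
  exact Ff_dvd k n hkn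
end

section
/- For natural numbers k < n, every maximal chain of the poset P_{k,n} has exactly k+n elements (so the rank of P_{k,n}, the common length of its maximal chains, is k+n−1). -/
/-- The poset `P_{k,n}`: pairs `(l,m)` of naturals with `l ≤ k` and `l < m ≤ n`,
ordered componentwise (which is the product order on `ℕ × ℕ`). -/
def Pkn (k n : ℕ) : Set (ℕ × ℕ) := {q | q.1 ≤ k ∧ q.1 < q.2 ∧ q.2 ≤ n}

/-- `C` is a maximal chain of the subposet of `ℕ × ℕ` (with the componentwise
order) on the set `V`: a chain contained in `V` not properly contained in any
chain contained in `V`. -/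
def IsMaxChainIn (V C : Set (ℕ × ℕ)) : Prop :=
  C ⊆ V ∧ IsChain (· ≤ ·) C ∧
    ∀ C', C' ⊆ V → IsChain (· ≤ ·) C' → C ⊆ C' → C' = C

/-! Rank `(l, m)` by `l + m`; this is strictly monotone, so a chain meets each rank at most once.
A maximal chain of `P_{k,n}` contains the least element `(0, 1)`, of rank `1`, and the greatest
element `(k, n)`, of rank `k + n`, and it skips no rank in between: if `x` lies in the chain and `y`
is the next element of the chain above `x`, then `P_{k,n}` has an element of rank `rank x + 1`
between `x` and `y`; it is comparable with the whole chain, hence belongs to it. So the ranks of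
the chain are exactly `1, …, k + n`. -/

theorem IsChain.injOn_of_strictMono {α β : Type*} [PartialOrder α] [Preorder β] {s : Set α}
    {f : α → β} (hs : IsChain (· ≤ ·) s) (hf : StrictMono f) : Set.InjOn f s := by
  intro x hx y hy hxy
  rcases hs.total hx hy with h | h
  · exact h.eq_or_lt.resolve_right fun hlt => (hf hlt).ne hxy
  · exact (h.eq_or_lt.resolve_right fun hlt => (hf hlt).ne hxy.symm).symm

namespace IsMaxChainIn

variable {V C : Set (ℕ × ℕ)} {c : ℕ × ℕ}

theorem mem_of_forall_le_or_le (hC : IsMaxChainIn V C) (hc : c ∈ V)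
    (hcomp : ∀ x ∈ C, c ≤ x ∨ x ≤ c) : c ∈ C := by
  obtain ⟨hCV, hchain, hmax⟩ := hC
  rw [← hmax _ (Set.insert_subset hc hCV) (hchain.insert fun x hx _ => hcomp x hx)
    (Set.subset_insert c C)]
  exact Set.mem_insert c C

theorem mem_of_isLeast (hC : IsMaxChainIn V C) (hc : IsLeast V c) : c ∈ C :=
  hC.mem_of_forall_le_or_le hc.1 fun _ hx => Or.inl (hc.2 (hC.1 hx))

theorem mem_of_isGreatest (hC : IsMaxChainIn V C) (hc : IsGreatest V c) : c ∈ C :=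
  hC.mem_of_forall_le_or_le hc.1 fun _ hx => Or.inr (hc.2 (hC.1 hx))

end IsMaxChainIn

namespace Pkn

def rank (q : ℕ × ℕ) : ℕ := q.1 + q.2

theorem rank_strictMono : StrictMono rank := by
  intro x y h
  rw [Prod.lt_iff] at h
  simp only [rank]
  omega

variable {k n : ℕ}

theorem isLeast (hn : 0 < n) : IsLeast (Pkn k n) (0, 1) :=
  ⟨⟨Nat.zero_le k, Nat.zero_lt_one, hn⟩,
    fun _ ⟨_, hlm, _⟩ => ⟨Nat.zero_le _, Nat.one_le_of_lt hlm⟩⟩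

theorem isGreatest (hkn : k < n) : IsGreatest (Pkn k n) (k, n) :=
  ⟨⟨le_rfl, hkn, le_rfl⟩, fun _ ⟨hl, _, hm⟩ => ⟨hl, hm⟩⟩

theorem rank_mem_Icc {q : ℕ × ℕ} (hq : q ∈ Pkn k n) : rank q ∈ Set.Icc 1 (k + n) := by
  obtain ⟨hl, hlm, hm⟩ := hq
  simp only [rank, Set.mem_Icc]
  omega

theorem exists_rank_succ_between {x y : ℕ × ℕ} (hx : x ∈ Pkn k n) (hy : y ∈ Pkn k n)
    (hxy : x < y) : ∃ c ∈ Pkn k n, x ≤ c ∧ c ≤ y ∧ rank c = rank x + 1 := by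
  obtain ⟨hxl, hxlm, hxm⟩ := hx
  obtain ⟨hyl, hylm, hym⟩ := hy
  rw [Prod.lt_iff] at hxy
  by_cases hm : x.2 < y.2
  · exact ⟨(x.1, x.2 + 1), ⟨hxl, by omega, by omega⟩, ⟨le_rfl, by omega⟩, ⟨by omega, by omega⟩,
      by simp only [rank]; omega⟩
  · exact ⟨(x.1 + 1, x.2), ⟨by omega, by omega, hxm⟩, ⟨by omega, le_rfl⟩, ⟨by omega, by omega⟩,
      by simp only [rank]; omega⟩

end Pkn

namespace IsMaxChainIn

variable {k n : ℕ} {C : Set (ℕ × ℕ)}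

theorem exists_rank_succ_mem (hC : IsMaxChainIn (Pkn k n) C) (hkn : k < n) {x : ℕ × ℕ}
    (hx : x ∈ C) (hrank : Pkn.rank x < k + n) : ∃ c ∈ C, Pkn.rank c = Pkn.rank x + 1 := by
  have hchain := hC.2.1
  have hx_lt_top : x < (k, n) :=
    ((Pkn.isGreatest hkn).2 (hC.1 hx)).lt_of_ne (by rintro rfl; exact hrank.ne rfl)
  obtain ⟨y, ⟨hyC, hxy⟩, hymin⟩ := exists_minimal_of_wellFoundedLT (fun y => y ∈ C ∧ x < y)
    ⟨(k, n), hC.mem_of_isGreatest (Pkn.isGreatest hkn), hx_lt_top⟩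
  obtain ⟨c, hcP, hxc, hcy, hc⟩ := Pkn.exists_rank_succ_between (hC.1 hx) (hC.1 hyC) hxy
  refine ⟨c, hC.mem_of_forall_le_or_le hcP fun z hz => ?_, hc⟩
  rcases hchain.total hz hx with hzx | hxz
  · exact Or.inr (hzx.trans hxc)
  rcases hxz.eq_or_lt with rfl | hxz
  · exact Or.inr hxc
  rcases hchain.total hz hyC with hzy | hyz
  · exact Or.inl (hcy.trans (hymin ⟨hz, hxz⟩ hzy))
  · exact Or.inl (hcy.trans hyz)

theorem rank_image_eq_Icc (hC : IsMaxChainIn (Pkn k n) C) (hkn : k < n) :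
    Pkn.rank '' C = Set.Icc 1 (k + n) := by
  refine subset_antisymm ?_ ?_
  · rintro _ ⟨q, hq, rfl⟩
    exact Pkn.rank_mem_Icc (hC.1 hq)
  · rintro v ⟨hv1, hv⟩
    induction v, hv1 using Nat.le_induction with
    | base => exact ⟨(0, 1), hC.mem_of_isLeast (Pkn.isLeast (by omega)), rfl⟩
    | succ v _ ih =>
      obtain ⟨x, hx, rfl⟩ := ih (by omega)
      exact hC.exists_rank_succ_mem hkn hx (by omega)

end IsMaxChainIn

/-- Every maximal chain of `P_{k,n}` has exactly `k + n` elements (so the rank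
of `P_{k,n}`, the common length of its maximal chains, is `k + n - 1`). -/
theorem Pkn_maxChain_card (k n : ℕ) (hkn : k < n) (C : Set (ℕ × ℕ))
    (hC : IsMaxChainIn (Pkn k n) C) : C.ncard = k + n := by
  rw [← (hC.2.1.injOn_of_strictMono Pkn.rank_strictMono).ncard_image,
    hC.rank_image_eq_Icc hkn, Set.ncard_Icc_nat]
  omega
end

section
/- For natural numbers 0 < k < n, the number d of maximal chains of the poset P_{k,n} satisfies n · d = (n−k) · \binom{n+k−1}{k}; that is, the number of maximal chains equals the ballot number counting monotone lattice paths from (0,0) to (k,n−1) that stay weakly below the diagonal (first coordinate ≤ second coordinate). -/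
/-! Every maximal chain of `P_{k,n}` contains the top `(k, n)` and the bottom `(0, 1)`, and the
element just below the top is one of its two lower covers `(k-1, n)` and `(k, n-1)` (the latter
only lying in `P_{k,n}` when `k + 1 < n`). Deleting the top turns the maximal chains through a
cover `x` bijectively into the maximal chains of `P_{k,n} ∩ Iic x`, which is `P_{k-1,n}`
resp. `P_{k,n-1}`. Hence the number of maximal chains satisfies the ballot recurrence, whose
solution is `(n - k) / n ⬝ C(n+k-1, k)`. -/

open Set

def maxChains (V : Set (ℕ × ℕ)) : Set (Set (ℕ × ℕ)) := {C | IsMaxChainIn V C}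

def lowerCoversIn (V : Set (ℕ × ℕ)) (t : ℕ × ℕ) : Set (ℕ × ℕ) :=
  {x ∈ V | x < t ∧ ∀ z ∈ V, x < z → ¬z < t}

section MaxChains

variable {V C D : Set (ℕ × ℕ)} {s t x : ℕ × ℕ}

theorem finite_maxChains (hV : V.Finite) : (maxChains V).Finite :=
  hV.finite_subsets.subset fun _ hC => hC.1

theorem maxChains_of_isChain (hV : IsChain (· ≤ ·) V) : maxChains V = {V} := by
  ext C
  refine ⟨fun hC => (hC.2.2 V subset_rfl hV hC.1).symm, ?_⟩
  rintro rfl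
  exact ⟨subset_rfl, hV, fun C' hC'V _ hVC' => hC'V.antisymm hVC'⟩

theorem IsMaxChainIn.mem_of_forall_le_or_le_s7 (hC : IsMaxChainIn V C) (ht : t ∈ V)
    (hcmp : ∀ v ∈ V, v ≤ t ∨ t ≤ v) : t ∈ C := by
  obtain ⟨hCV, hCc, hmax⟩ := hC
  have := hmax (insert t C) (insert_subset ht hCV)
    (hCc.insert fun c hc _ => (hcmp c (hCV hc)).symm) (subset_insert t C)
  exact this ▸ mem_insert t C

theorem IsMaxChainIn.inter_Iic (hC : IsMaxChainIn V C) (hx : x ∈ C) :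
    IsMaxChainIn (V ∩ Iic x) (C ∩ Iic x) := by
  obtain ⟨hCV, hCc, hmax⟩ := hC
  refine ⟨inter_subset_inter_left _ hCV, hCc.mono inter_subset_left,
    fun D hDV hDc hCD => Subset.antisymm (fun d hd => ⟨?_, (hDV hd).2⟩) hCD⟩
  -- `D` together with the part of `C` above `x` is a chain of `V` extending `C`.
  have hE : D ∪ {c ∈ C | x ≤ c} = C := by
    refine hmax _ (union_subset (hDV.trans inter_subset_left) fun c hc => hCV hc.1) ?_ ?_
    · exact isChain_union.2 ⟨hDc, hCc.mono (sep_subset _ _),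
        fun d hd c hc _ => Or.inl ((hDV hd).2.trans hc.2)⟩
    · intro c hc
      rcases hCc.total hc hx with hcx | hxc
      · exact Or.inl (hCD ⟨hc, hcx⟩)
      · exact Or.inr ⟨hc, hxc⟩
  exact hE ▸ Or.inl hd

theorem IsMaxChainIn.exists_mem_lowerCoversIn (hV : V.Finite) (hC : IsMaxChainIn V C)
    (ht : t ∈ C) (htop : ∀ v ∈ V, v ≤ t) (hs : s ∈ V) (hst : s < t) :
    ∃ x ∈ C, x ∈ lowerCoversIn V t := by
  obtain ⟨hCV, hCc, hmax⟩ := hC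
  have hbelow : {c ∈ C | c < t}.Nonempty := by
    by_contra hempty
    have hCt : C ⊆ {t} := fun c hc =>
      (htop c (hCV hc)).eq_or_lt.resolve_right fun hct => hempty ⟨c, hc, hct⟩
    have hsC : insert s C = C := hmax _ (insert_subset hs hCV)
      (hCc.insert fun c hc _ => Or.inl ((hCt hc : c = t) ▸ hst.le)) (subset_insert s C)
    exact hempty ⟨s, hsC ▸ mem_insert s C, hst⟩
  obtain ⟨x, ⟨hxC, hxt⟩, hxmax⟩ := ((hV.subset hCV).sep _).exists_maximal hbelow
  refine ⟨x, hxC, hCV hxC, hxt, fun z hzV hxz hzt => ?_⟩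
  -- every element of `C` is either `t` or at most `x`, so `z` could be added to `C`
  have hzC : insert z C = C := by
    refine hmax _ (insert_subset hzV hCV) (hCc.insert fun c hc _ => ?_) (subset_insert z C)
    rcases (htop c (hCV hc)).eq_or_lt with rfl | hct
    · exact Or.inl hzt.le
    · rcases hCc.total hc hxC with hcx | hxc
      · exact Or.inr (hcx.trans hxz.le)
      · exact Or.inr ((hxmax ⟨hc, hct⟩ hxc).trans hxz.le)
  exact hxz.not_ge (hxmax ⟨hzC ▸ mem_insert z C, hzt⟩ hxz.le)

theorem IsMaxChainIn.insert_inter_Iic_eq (hC : IsMaxChainIn V C) (htop : ∀ v ∈ V, v ≤ t)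
    (ht : t ∈ C) (hxC : x ∈ C) (hx : x ∈ lowerCoversIn V t) : insert t (C ∩ Iic x) = C := by
  refine Subset.antisymm (insert_subset ht inter_subset_left) fun c hc => ?_
  rcases (htop c (hC.1 hc)).eq_or_lt with rfl | hct
  · exact mem_insert _ _
  · refine mem_insert_of_mem _ ⟨hc, ?_⟩
    rcases hC.2.1.total hc hxC with hcx | hxc
    · exact hcx
    · exact hxc.eq_or_lt.elim ge_of_eq fun hxc => (hx.2.2 c (hC.1 hc) hxc hct).elim

theorem IsMaxChainIn.insert_of_mem_lowerCoversIn (hD : IsMaxChainIn (V ∩ Iic x) D)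
    (ht : t ∈ V) (htop : ∀ v ∈ V, v ≤ t) (hx : x ∈ lowerCoversIn V t) :
    IsMaxChainIn V (insert t D) := by
  have hxD : x ∈ D := hD.mem_of_forall_le_or_le_s7 ⟨hx.1, self_mem_Iic⟩ fun v hv => Or.inl hv.2
  obtain ⟨hDV, hDc, hmax⟩ := hD
  refine ⟨insert_subset ht (hDV.trans inter_subset_left),
    hDc.insert fun d hd _ => Or.inr (htop d (hDV hd).1), fun C hCV hCc hDC => ?_⟩
  refine Subset.antisymm (fun y hy => ?_) hDC
  have hCx : C ∩ Iic x = D :=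
    hmax _ (inter_subset_inter_left _ hCV) (hCc.mono inter_subset_left) fun d hd =>
      ⟨hDC (mem_insert_of_mem _ hd), (hDV hd).2⟩
  rcases hCc.total hy (hDC (mem_insert_of_mem _ hxD)) with hyx | hxy
  · exact mem_insert_of_mem _ (hCx ▸ ⟨hy, hyx⟩)
  · rcases hxy.eq_or_lt with rfl | hxy
    · exact mem_insert_of_mem _ hxD
    · rcases (htop y (hCV hy)).eq_or_lt with rfl | hyt
      · exact mem_insert _ _
      · exact (hx.2.2 y (hCV hy) hxy hyt).elim

theorem maxChains_eq_biUnion (hV : V.Finite) (ht : t ∈ V) (htop : ∀ v ∈ V, v ≤ t)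
    (hs : s ∈ V) (hst : s < t) :
    maxChains V = ⋃ x ∈ lowerCoversIn V t, insert t '' maxChains (V ∩ Iic x) := by
  ext C
  simp only [mem_iUnion, mem_image, exists_prop]
  constructor
  · intro hC
    have htC : t ∈ C := hC.mem_of_forall_le_or_le_s7 ht fun v hv => Or.inl (htop v hv)
    obtain ⟨x, hxC, hx⟩ := hC.exists_mem_lowerCoversIn hV htC htop hs hst
    exact ⟨x, hx, C ∩ Iic x, hC.inter_Iic hxC, hC.insert_inter_Iic_eq htop htC hxC hx⟩
  · rintro ⟨x, hx, D, hD, rfl⟩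
    exact hD.insert_of_mem_lowerCoversIn ht htop hx

end MaxChains

theorem ncard_image_insert {α : Type*} {S : Set (Set α)} {t : α} (h : ∀ D ∈ S, t ∉ D) :
    (insert t '' S).ncard = S.ncard :=
  InjOn.ncard_image fun D hD E hE hDE => by
    rw [← insert_sdiff_self_of_notMem (h D hD), hDE, insert_sdiff_self_of_notMem (h E hE)]

section Pkn

variable {a b : ℕ}

theorem finite_Pkn (a b : ℕ) : (Pkn a b).Finite :=
  (finite_Iic (a, b)).subset fun _ hq => ⟨hq.1, hq.2.2⟩

theorem le_of_mem_Pkn {q : ℕ × ℕ} (hq : q ∈ Pkn a b) : q ≤ (a, b) :=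
  ⟨hq.1, hq.2.2⟩

theorem Pkn_inter_Iic {q : ℕ × ℕ} (hq : q ≤ (a, b)) : Pkn a b ∩ Iic q = Pkn q.1 q.2 := by
  obtain ⟨hqa, hqb⟩ := hq
  ext ⟨l, m⟩
  simp only [Pkn, mem_inter_iff, mem_ofPred_eq, mem_Iic, Prod.le_def] at hqa hqb ⊢
  omega

theorem isChain_Pkn_zero (b : ℕ) : IsChain (· ≤ ·) (Pkn 0 b) := by
  rintro ⟨l, m⟩ h ⟨l', m'⟩ h' -
  simp only [Pkn, mem_ofPred_eq, Prod.mk_le_mk] at h h' ⊢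
  omega

theorem mem_lowerCoversIn_Pkn_iff (hab : a ≤ b) {x : ℕ × ℕ} :
    x ∈ lowerCoversIn (Pkn (a + 1) (b + 1)) (a + 1, b + 1) ↔
      x ∈ Pkn (a + 1) (b + 1) ∧ (x = (a, b + 1) ∨ x = (a + 1, b)) := by
  obtain ⟨l, m⟩ := x
  refine ⟨fun ⟨hx, hxt, hcov⟩ => ⟨hx, ?_⟩, fun ⟨hx, h⟩ => ⟨hx, ?_⟩⟩
  · have hup := hcov (l, m + 1)
    have hright := hcov (l + 1, m)
    simp only [Pkn, mem_ofPred_eq, Prod.lt_iff, Prod.mk.injEq] at hx hxt hup hright ⊢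
    omega
  · simp only [Prod.mk.injEq] at h
    rcases h with ⟨rfl, rfl⟩ | ⟨rfl, rfl⟩ <;>
      exact ⟨by simp [Prod.lt_iff], fun ⟨p, q⟩ _ => by simp only [Prod.lt_iff]; omega⟩

theorem lowerCoversIn_Pkn_of_lt (hab : a + 1 < b) :
    lowerCoversIn (Pkn (a + 1) (b + 1)) (a + 1, b + 1) = {(a, b + 1), (a + 1, b)} := by
  ext x
  rw [mem_lowerCoversIn_Pkn_iff (by omega), mem_insert_iff, mem_singleton_iff]
  refine ⟨And.right, fun h => ⟨?_, h⟩⟩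
  rcases h with rfl | rfl <;> simp only [Pkn, mem_ofPred_eq] <;> omega

theorem lowerCoversIn_Pkn_succ_add_two (a : ℕ) :
    lowerCoversIn (Pkn (a + 1) (a + 2)) (a + 1, a + 2) = {(a, a + 2)} := by
  ext ⟨l, m⟩
  rw [mem_lowerCoversIn_Pkn_iff (Nat.le_succ a), mem_singleton_iff]
  simp only [Pkn, mem_ofPred_eq, Prod.mk.injEq]
  omega

theorem maxChains_Pkn_succ_succ (hab : a < b) :
    maxChains (Pkn (a + 1) (b + 1)) =
      ⋃ x ∈ lowerCoversIn (Pkn (a + 1) (b + 1)) (a + 1, b + 1),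
        insert (a + 1, b + 1) '' maxChains (Pkn x.1 x.2) := by
  have ht : (a + 1, b + 1) ∈ Pkn (a + 1) (b + 1) := by simp only [Pkn, mem_ofPred_eq]; omega
  have hs : (0, 1) ∈ Pkn (a + 1) (b + 1) := by simp only [Pkn, mem_ofPred_eq]; omega
  rw [maxChains_eq_biUnion (finite_Pkn _ _) ht (fun _ => le_of_mem_Pkn) hs
    (by simp [Prod.lt_iff])]
  exact iUnion₂_congr fun x hx => by rw [Pkn_inter_Iic (le_of_mem_Pkn hx.1)]

theorem notMem_of_mem_maxChains_Pkn {C : Set (ℕ × ℕ)} (hC : C ∈ maxChains (Pkn a b))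
    {q : ℕ × ℕ} (hq : ¬q ≤ (a, b)) : q ∉ C :=
  fun hqC => hq (le_of_mem_Pkn (hC.1 hqC))

theorem ncard_maxChains_Pkn_succ_succ (hab : a + 1 < b) :
    (maxChains (Pkn (a + 1) (b + 1))).ncard =
      (maxChains (Pkn a (b + 1))).ncard + (maxChains (Pkn (a + 1) b)).ncard := by
  rw [maxChains_Pkn_succ_succ (by omega), lowerCoversIn_Pkn_of_lt hab, biUnion_pair,
    ← image_union, ncard_image_insert,
    ncard_union_eq _ (finite_maxChains (finite_Pkn _ _)) (finite_maxChains (finite_Pkn _ _))]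
  · rw [disjoint_left]
    intro D hD hD'
    have htop : (a, b + 1) ∈ Pkn a (b + 1) := by simp only [Pkn, mem_ofPred_eq]; omega
    have hmem : (a, b + 1) ∈ D :=
      hD.mem_of_forall_le_or_le_s7 htop fun v hv => Or.inl (le_of_mem_Pkn hv)
    exact notMem_of_mem_maxChains_Pkn hD' (by simp) hmem
  · rintro D (hD | hD) <;> exact notMem_of_mem_maxChains_Pkn hD (by simp)

theorem ncard_maxChains_Pkn_succ_add_two (a : ℕ) :
    (maxChains (Pkn (a + 1) (a + 2))).ncard = (maxChains (Pkn a (a + 2))).ncard := by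
  rw [maxChains_Pkn_succ_succ (Nat.lt_succ_self a), lowerCoversIn_Pkn_succ_add_two,
    biUnion_singleton, ncard_image_insert]
  exact fun D hD => notMem_of_mem_maxChains_Pkn hD (by simp)

end Pkn

theorem mul_eq_of_ballot_recurrence (f : ℕ → ℕ → ℕ) (h0 : ∀ b, f 0 b = 1)
    (hstep : ∀ a b, a + 1 < b → f (a + 1) (b + 1) = f a (b + 1) + f (a + 1) b)
    (hdiag : ∀ a, f (a + 1) (a + 2) = f a (a + 2)) :
    ∀ k n, k < n → n * f k n = (n - k) * (n + k - 1).choose k := by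
  intro k
  induction k with
  | zero => intro n _; simp [h0]
  | succ a iha =>
    intro n
    induction n with
    | zero => omega
    | succ b ihb =>
      intro hab
      have hleft := iha (b + 1) (by omega)
      rw [show b + 1 + a - 1 = a + b by omega] at hleft
      rw [show b + 1 + (a + 1) - 1 = a + b + 1 by omega, show b + 1 - (a + 1) = b - a by omega]
      rcases (Nat.lt_succ_iff.1 hab).lt_or_eq with hlt | rfl
      · have hbelow := ihb hlt
        rw [show b + (a + 1) - 1 = a + b by omega] at hbelow
        -- both binomials are multiples of `(a + b).choose a`; after clearing the denominator
        -- `b * (a + 1)` the claim is a polynomial identity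
        have hZ := Nat.choose_succ_right_eq (a + b) a
        have hY := Nat.add_one_mul_choose_eq (a + b) a
        rw [show a + b - a = b by omega] at hZ
        rw [hstep a b hlt]
        have hb : (b : ℤ) * (a + 1) ≠ 0 := by
          have : (0 : ℤ) < b := by exact_mod_cast (show 0 < b by omega)
          positivity
        zify [show a ≤ b + 1 by omega, show a ≤ b by omega, show a + 1 ≤ b by omega]
          at hleft hbelow hZ hY ⊢
        apply mul_left_cancel₀ hb
        linear_combination (↑b * (↑a + 1)) * hleft + ((↑a + 1) * (↑b + 1)) * hbelow +
          ((↑b + 1) * (↑b - ↑a - 1)) * hZ + (↑b * (↑b - ↑a)) * hY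
      · rw [hdiag, show a + (a + 1) + 1 = 2 * a + 1 + 1 by omega, Nat.choose_succ_succ,
          Nat.choose_symm_half, show a + 1 - a = 1 by omega]
        rw [show a + 1 + 1 - a = 2 by omega, show a + (a + 1) = 2 * a + 1 by omega] at hleft
        linarith

theorem Pkn_card_maxChains_general (k n : ℕ) (hkn : k < n) :
    n * {C : Set (ℕ × ℕ) | IsMaxChainIn (Pkn k n) C}.ncard
      = (n - k) * Nat.choose (n + k - 1) k :=
  mul_eq_of_ballot_recurrence (fun k n => (maxChains (Pkn k n)).ncard)
    (fun b => by simp [maxChains_of_isChain (isChain_Pkn_zero b)])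
    (fun _ _ => ncard_maxChains_Pkn_succ_succ) ncard_maxChains_Pkn_succ_add_two k n hkn

/-- For `0 < k < n`, the number `d` of maximal chains of `P_{k,n}` satisfies
`n ⬝ d = (n - k) ⬝ C(n+k-1, k)` (the ballot number counting monotone lattice
paths from `(0,0)` to `(k,n-1)` staying weakly below the diagonal). -/
theorem Pkn_card_maxChains (k n : ℕ) (hk : 0 < k) (hkn : k < n) :
    n * {C : Set (ℕ × ℕ) | IsMaxChainIn (Pkn k n) C}.ncard
      = (n - k) * Nat.choose (n + k - 1) k :=
  Pkn_card_maxChains_general k n hkn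
end

section
/- Let F : ℕ → ℕ be a sequence with F 0 = 1 and F p ≥ 1 for all p, and suppose for some level p one has F p ≥ 2 and F (p+1) ≥ 2. Then the two distinct vertices (1,p) and (2,p) of the cobweb poset have no least upper bound; in particular, the cobweb poset is not a lattice. -/
/-- The cobweb partial order relation on vertices `(j, p)`, where the second
coordinate is the level: `(j,p) ≤ (q,s)` iff `(j,p) = (q,s)` or `p < s`. -/
def cobwebLe (a b : ℕ × ℕ) : Prop := a = b ∨ a.2 < b.2

/-- The vertex set of the cobweb poset of the sequence `F`:
pairs `(j,p)` with `1 ≤ j ≤ F p`. -/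
def cobwebVerts (F : ℕ → ℕ) : Set (ℕ × ℕ) := {v | 1 ≤ v.1 ∧ v.1 ≤ F v.2}

/-- If `F p ≥ 2` and `F (p+1) ≥ 2`, then the two distinct vertices `(1,p)` and
`(2,p)` of the cobweb poset have no least upper bound; in particular the cobweb
poset is not a lattice. -/
theorem cobweb_not_lattice (F : ℕ → ℕ) (hF0 : F 0 = 1) (hF : ∀ p, 1 ≤ F p)
    (p : ℕ) (hp : 2 ≤ F p) (hp1 : 2 ≤ F (p + 1)) :
    ¬ ∃ u ∈ cobwebVerts F,
        (cobwebLe (1, p) u ∧ cobwebLe (2, p) u) ∧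
          ∀ w ∈ cobwebVerts F, cobwebLe (1, p) w → cobwebLe (2, p) w →
            cobwebLe u w := by
  rintro ⟨u, _, ⟨h1, h2⟩, hlub⟩
  -- u must be at level > p
  have hlev : p < u.2 := by
    rcases h1 with h1 | h1
    · rcases h2 with h2 | h2
      · exact absurd (h1 ▸ h2) (by simp)
      · exact h2
    · exact h1
  -- both (1,p+1) and (2,p+1) are upper bounds
  have hw1 : cobwebLe u (1, p + 1) := by
    refine hlub _ ⟨le_refl 1, by simpa using hp1.trans' (by norm_num)⟩ ?_ ?_ <;>
      exact Or.inr (Nat.lt_succ_self p)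
  have hw2 : cobwebLe u (2, p + 1) := by
    refine hlub _ ⟨by norm_num, hp1⟩ ?_ ?_ <;> exact Or.inr (Nat.lt_succ_self p)
  have hle : p + 1 ≤ u.2 := hlev
  rcases hw1 with hw1 | hw1
  · rcases hw2 with hw2 | hw2
    · rw [hw1] at hw2; simp at hw2
    · rw [hw1] at hle hw2; simp at hw2
  · exact absurd hw1 (by omega)
end
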